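/- If G is a d-distinguishing critical graph with d ≥ 3, then G contains no induced star K_{1,d}. -/

import Mathlib

/-!
If `G` contained an induced star `K_{1,d}` on a proper vertex set, that induced subgraph would
already have distinguishing number `d`, contradicting criticality. Otherwise `G` is itself the
star, and deleting its centre leaves `d` isolated vertices, whose distinguishing number is again
`d`. Both values of `d` come from the same count: a distinguishing labeling must be injective on
any set of vertices all of whose transpositions are automorphisms.
-/

/-- A labeling with `r` labels is distinguishing if the only automorphism
preserving all labels is the identity. -/
def IsDistinguishing {V : Type*} (G : SimpleGraph V) (r : ℕ) (f : V → Fin r) : Prop :=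
  ∀ φ : G ≃g G, (∀ v, f (φ v) = f v) → ∀ v, φ v = v

/-- The distinguishing number of a graph. -/
noncomputable def distNum {V : Type*} (G : SimpleGraph V) : ℕ :=
  sInf {r : ℕ | ∃ f : V → Fin r, IsDistinguishing G r f}

/-- A graph is `d`-distinguishing critical if its distinguishing number is `d`
and no proper induced subgraph has distinguishing number `d`. -/
def DistCritical {V : Type*} (G : SimpleGraph V) (d : ℕ) : Prop :=
  distNum G = d ∧ ∀ s : Set V, s ≠ Set.univ → distNum (G.induce s) ≠ d

/-- The disjoint union of `c` copies of a graph `H`. -/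
def copies {W : Type*} (c : ℕ) (H : SimpleGraph W) : SimpleGraph (Fin c × W) where
  Adj a b := a.1 = b.1 ∧ H.Adj a.2 b.2
  symm := ⟨fun a b h => ⟨h.1.symm, h.2.symm⟩⟩
  loopless := ⟨fun a h => H.loopless.irrefl a.2 h.2⟩

/-- `numDistLab G k` is the number of inequivalent `k`-distinguishing labelings of `G`,
two labelings being equivalent when some automorphism of `G` maps one to the other. -/
noncomputable def numDistLab {V : Type*} (G : SimpleGraph V) (k : ℕ) : ℕ :=
  Nat.card (Quot (fun f g : {f : V → Fin k // IsDistinguishing G k f} =>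
    ∃ φ : G ≃g G, ∀ v, f.1 (φ v) = g.1 v))

open SimpleGraph Equiv

section Distinguishing

variable {V W : Type*} {G : SimpleGraph V} {r : ℕ} {f : V → Fin r}

lemma IsDistinguishing.comp_iso_symm {H : SimpleGraph W} (hf : IsDistinguishing G r f)
    (e : G ≃g H) : IsDistinguishing H r (f ∘ e.symm) := by
  intro ψ hψ w
  have h := hf ((e.trans ψ).trans e.symm) (fun v => by simpa using hψ (e v)) (e.symm w)
  simpa using h

lemma distNum_congr {H : SimpleGraph W} (e : G ≃g H) : distNum G = distNum H := by
  unfold distNum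
  congr 1
  ext r
  exact ⟨fun ⟨_, hf⟩ => ⟨_, hf.comp_iso_symm e⟩,
    fun ⟨_, hf⟩ => ⟨_, hf.comp_iso_symm e.symm⟩⟩

lemma isDistinguishing_of_injective (hf : Function.Injective f) : IsDistinguishing G r f :=
  fun _ hφ v => hf (hφ v)

lemma IsDistinguishing.apply_ne_of_coe_eq_swap [DecidableEq V] (hf : IsDistinguishing G r f)
    {u v : V} (huv : u ≠ v) (φ : G ≃g G) (hφ : ⇑φ = swap u v) : f u ≠ f v := by
  intro h
  have hu := hf φ (fun w => by rw [hφ]; exact apply_swap_eq_self h w) u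
  rw [hφ, swap_apply_left] at hu
  exact huv hu.symm

lemma IsDistinguishing.card_le_of_swap [DecidableEq V] {ι : Type*} (hf : IsDistinguishing G r f)
    (g : ι → V) (hg : Function.Injective g)
    (hswap : ∀ i j, ∃ φ : G ≃g G, ⇑φ = swap (g i) (g j)) :
    Nat.card ι ≤ r := by
  have hinj : Function.Injective (f ∘ g) := fun i j hij => by
    by_contra hne
    obtain ⟨φ, hφ⟩ := hswap i j
    exact hf.apply_ne_of_coe_eq_swap (hg.ne hne) φ hφ hij
  simpa using Nat.card_le_card_of_injective _ hinj

lemma distNum_eq_of_swap [DecidableEq V] {ι : Type*} {n : ℕ} (g : ι → V)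
    (hg : Function.Injective g) (hswap : ∀ i j, ∃ φ : G ≃g G, ⇑φ = swap (g i) (g j))
    (hcard : Nat.card ι = n)
    {f : V → Fin n} (hf : IsDistinguishing G n f) : distNum G = n :=
  IsLeast.csInf_eq ⟨⟨f, hf⟩, fun _ ⟨_, hf'⟩ => hcard ▸ hf'.card_le_of_swap g hg hswap⟩

lemma distNum_bot [Finite W] : distNum (⊥ : SimpleGraph W) = Nat.card W := by
  classical
  exact distNum_eq_of_swap id Function.injective_id (fun u v => ⟨⟨swap u v, by simp⟩, rfl⟩)
    rfl (isDistinguishing_of_injective (Finite.equivFin W).injective)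

end Distinguishing

section Star

variable {d : ℕ}

lemma eq_inl_zero_or_eq_inl_zero_of_adj {u v : Fin 1 ⊕ Fin d}
    (h : (completeBipartiteGraph (Fin 1) (Fin d)).Adj u v) : u = .inl 0 ∨ v = .inl 0 := by
  rcases u with x | i <;> rcases v with y | j <;> simp_all [Fin.eq_zero]

lemma starIso_apply_inl_zero (hd : 2 ≤ d)
    (φ : completeBipartiteGraph (Fin 1) (Fin d) ≃g completeBipartiteGraph (Fin 1) (Fin d)) :
    φ (.inl 0) = .inl 0 := by
  rcases hc : φ (.inl 0) with x | k
  · rw [Fin.eq_zero x]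
  have hleaf : ∀ j, φ (.inr j) = .inl 0 := fun j => by
    have hadj := φ.map_adj_iff.mpr (show (completeBipartiteGraph (Fin 1) (Fin d)).Adj
      (.inl 0) (.inr j) by simp)
    rw [hc] at hadj
    simpa using eq_inl_zero_or_eq_inl_zero_of_adj hadj
  have h01 := φ.injective ((hleaf ⟨0, by omega⟩).trans (hleaf ⟨1, by omega⟩).symm)
  simp at h01

-- The centre shares label `0` with the first leaf, but every automorphism fixes the centre.
lemma isDistinguishing_star (hd : 2 ≤ d) :
    IsDistinguishing (completeBipartiteGraph (Fin 1) (Fin d)) d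
      (Sum.elim (fun _ => ⟨0, by omega⟩) id) := by
  intro φ hφ
  have hc := starIso_apply_inl_zero hd φ
  rintro (x | j)
  · rw [Fin.eq_zero x, hc]
  · rcases h : φ (.inr j) with x | k
    · have := φ.injective (h.trans (hc.trans (by rw [Fin.eq_zero x])).symm)
      simp at this
    · simpa [h] using hφ (.inr j)

lemma distNum_star (hd : 2 ≤ d) : distNum (completeBipartiteGraph (Fin 1) (Fin d)) = d :=
  distNum_eq_of_swap Sum.inr Sum.inr_injective
    (fun i j => ⟨completeBipartiteGraphCongr (Equiv.refl _) (swap i j),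
      by rw [← Perm.sumCongr_refl_swap]; rfl⟩)
    (Nat.card_fin d) (isDistinguishing_star hd)

lemma distNum_induce_compl_center {V : Type*} {G : SimpleGraph V}
    (e : G ≃g completeBipartiteGraph (Fin 1) (Fin d)) :
    distNum (G.induce {e.symm (.inl 0)}ᶜ) = d := by
  have : Finite V := Finite.of_equiv _ e.symm.toEquiv
  have hbot : G.induce {e.symm (.inl 0)}ᶜ = ⊥ := by
    refine eq_bot_iff_forall_not_adj.mpr fun u v huv => ?_
    rcases eq_inl_zero_or_eq_inl_zero_of_adj (e.map_adj_iff.mpr huv) with h | h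
    · exact u.2 (e.eq_symm_apply.mpr h)
    · exact v.2 (e.eq_symm_apply.mpr h)
  rw [hbot, distNum_bot, Nat.card_coe_set_eq, Set.ncard_compl, Set.ncard_singleton,
    Nat.card_congr e.toEquiv, Nat.card_sum]
  simp

end Star

theorem stmt5 {V : Type*} (G : SimpleGraph V) (d : ℕ) (hd : 3 ≤ d)
    (hcrit : DistCritical G d) :
    ¬ ∃ s : Set V, Nonempty ((G.induce s) ≃g completeBipartiteGraph (Fin 1) (Fin d)) := by
  rintro ⟨s, ⟨e⟩⟩
  by_cases hs : s = Set.univ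
  · subst hs
    exact hcrit.2 _ (Set.compl_ne_univ.mpr (Set.singleton_nonempty _))
      (distNum_induce_compl_center ((induceUnivIso G).symm.trans e))
  · exact hcrit.2 s hs ((distNum_congr e).trans (distNum_star (by omega)))
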